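/- Let A ∈ ℝ^{m×n}, let Θ ∈ ℝ^{n×n} be diagonal with strictly positive diagonal entries, and let R_d ∈ ℝ^{m×m} be symmetric positive definite. Then every strictly positive eigenvalue μ of the symmetric matrix M = [[−Θ^{-1}, Aᵀ],[A, R_d]] satisfies μ² − λ_max(R_d) μ − σ_max(A)² ≤ 0, and hence μ ≤ (1/2) ( λ_max(R_d) + [ λ_max(R_d)² + 4 σ_max(A)² ]^{1/2} ). In particular, if λ_max(R_d) ≤ 2δ_d for some δ_d > 0, then the largest eigenvalue μ_m of M satisfies μ_m ≤ (1/2) ( 2δ_d + [ 4δ_d² + 4σ_max(A)² ]^{1/2} ). -/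

import Mathlib

/-!
Write an eigenvector of `M` for `μ > 0` as `x = (u, v)` and put `t = ⟪u, Aᵀ v⟫`. Pairing the two
block rows of `M x = μ x` with `u` and with `v`, and using `Θ⁻¹ ⪰ 0` and `R_d ⪯ λ_max(R_d)`, gives
`μ ‖u‖² ≤ t` and `(μ - λ_max(R_d)) ‖v‖² ≤ t`, while Cauchy–Schwarz and `‖Aᵀ v‖ ≤ σ_max(A) ‖v‖`
give `t² ≤ σ_max(A)² ‖u‖² ‖v‖²`. If `μ > λ_max(R_d)`, multiplying the first two bounds yields the
quadratic inequality for `μ` (otherwise it is immediate); the upper bounds are its larger root.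
-/

open Matrix

/-- Spectral norm (largest singular value) of a real matrix. -/
noncomputable def specNorm {m n : ℕ} (A : Matrix (Fin m) (Fin n) ℝ) : ℝ :=
  Real.sqrt (⨆ i, (Matrix.isHermitian_mul_conjTranspose_self A).eigenvalues i)

section Rayleigh

variable {ι : Type*} [Fintype ι] [DecidableEq ι] {B : Matrix ι ι ℝ}

theorem Matrix.IsHermitian.posSemidef_smul_one_sub (hB : B.IsHermitian) {c : ℝ}
    (hc : ∀ i, hB.eigenvalues i ≤ c) : (c • 1 - B).PosSemidef := by
  have hconj : c • 1 - B = Unitary.conjStarAlgAut ℝ _ hB.eigenvectorUnitary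
      (diagonal fun i => c - hB.eigenvalues i) := by
    have hdiag : (diagonal fun i => c - hB.eigenvalues i) =
        c • 1 - diagonal (RCLike.ofReal ∘ hB.eigenvalues) := by
      ext i j
      by_cases h : i = j <;> simp [h]
    rw [hdiag, map_sub, map_smul, map_one, ← hB.spectral_theorem]
  rw [hconj, Unitary.conjStarAlgAut_apply]
  exact (PosSemidef.diagonal fun i => sub_nonneg.2 (hc i)).mul_mul_conjTranspose_same _

theorem Matrix.IsHermitian.dotProduct_mulVec_le (hB : B.IsHermitian) {c : ℝ}
    (hc : ∀ i, hB.eigenvalues i ≤ c) (v : ι → ℝ) : v ⬝ᵥ B *ᵥ v ≤ c * (v ⬝ᵥ v) := by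
  have := (hB.posSemidef_smul_one_sub hc).dotProduct_mulVec_nonneg v
  simp only [star_trivial, sub_mulVec, smul_mulVec, one_mulVec, dotProduct_sub,
    dotProduct_smul, smul_eq_mul] at this
  linarith

theorem Matrix.IsHermitian.dotProduct_mulVec_le_iSup_eigenvalues (hB : B.IsHermitian)
    (v : ι → ℝ) : v ⬝ᵥ B *ᵥ v ≤ (⨆ i, hB.eigenvalues i) * (v ⬝ᵥ v) :=
  hB.dotProduct_mulVec_le (fun i => le_ciSup (Set.finite_range _).bddAbove i) v

end Rayleigh

theorem Matrix.sq_dotProduct_le {ι : Type*} [Fintype ι] (u w : ι → ℝ) :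
    (u ⬝ᵥ w) ^ 2 ≤ (u ⬝ᵥ u) * (w ⬝ᵥ w) := by
  simpa only [dotProduct, sq] using Finset.sum_mul_sq_le_sq_mul_sq Finset.univ u w

theorem Matrix.dotProduct_self_nonneg {ι : Type*} [Fintype ι] (v : ι → ℝ) : 0 ≤ v ⬝ᵥ v :=
  Finset.sum_nonneg fun i _ => mul_self_nonneg (v i)

theorem specNorm_sq {m n : ℕ} (A : Matrix (Fin m) (Fin n) ℝ) :
    specNorm A ^ 2 = ⨆ i, (isHermitian_mul_conjTranspose_self A).eigenvalues i :=
  Real.sq_sqrt (Real.iSup_nonneg (eigenvalues_self_mul_conjTranspose_nonneg A))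

theorem dotProduct_self_transpose_mulVec_le_specNorm_sq {m n : ℕ} (A : Matrix (Fin m) (Fin n) ℝ)
    (v : Fin m → ℝ) : (Aᵀ *ᵥ v) ⬝ᵥ (Aᵀ *ᵥ v) ≤ specNorm A ^ 2 * (v ⬝ᵥ v) := by
  have h := (isHermitian_mul_conjTranspose_self A).dotProduct_mulVec_le_iSup_eigenvalues v
  rwa [← specNorm_sq, conjTranspose_eq_transpose_of_trivial, ← mulVec_mulVec,
    dotProduct_mulVec, ← mulVec_transpose] at h

theorem sq_sub_mul_sub_sq_nonpos {μ lam σ p q t : ℝ} (hμ : 0 < μ) (hp : 0 ≤ p) (hq : 0 ≤ q)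
    (hpq : 0 < p + q) (hpt : μ * p ≤ t) (hqt : (μ - lam) * q ≤ t)
    (ht : t ^ 2 ≤ σ ^ 2 * p * q) : μ ^ 2 - lam * μ - σ ^ 2 ≤ 0 := by
  rcases le_or_gt μ lam with hle | hlt
  · nlinarith [sq_nonneg σ]
  have hpq_pos : 0 < p * q := by
    by_contra! hpq_nonpos
    have ht0 : t = 0 := pow_eq_zero_iff two_ne_zero |>.1 <|
      le_antisymm (ht.trans (by nlinarith [sq_nonneg σ, mul_nonneg hp hq])) (sq_nonneg t)
    subst ht0
    have hp0 : p ≤ 0 := by nlinarith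
    have hq0 : q ≤ 0 := by nlinarith
    linarith
  have hprod : μ * (μ - lam) * (p * q) ≤ σ ^ 2 * (p * q) := by
    nlinarith [mul_le_mul hpt hqt (by nlinarith) (by nlinarith)]
  nlinarith [le_of_mul_le_mul_right hprod hpq_pos]

theorem le_half_add_sqrt_of_sq_sub_mul_sub_sq_nonpos {μ lam σ : ℝ}
    (h : μ ^ 2 - lam * μ - σ ^ 2 ≤ 0) :
    μ ≤ (1 / 2) * (lam + Real.sqrt (lam ^ 2 + 4 * σ ^ 2)) := by
  have : 2 * μ - lam ≤ Real.sqrt (lam ^ 2 + 4 * σ ^ 2) :=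
    Real.le_sqrt_of_sq_le (by nlinarith)
  linarith

theorem sq_sub_mul_sub_sq_nonpos_fromBlocks {ι κ : Type*} [Fintype ι] [Fintype κ]
    {P : Matrix ι ι ℝ} (hP : P.PosSemidef) (A : Matrix κ ι ℝ) {R : Matrix κ κ ℝ} {lam σ : ℝ}
    (hR : ∀ v, v ⬝ᵥ R *ᵥ v ≤ lam * (v ⬝ᵥ v))
    (hA : ∀ v, (Aᵀ *ᵥ v) ⬝ᵥ (Aᵀ *ᵥ v) ≤ σ ^ 2 * (v ⬝ᵥ v))
    {μ : ℝ} (hμ : 0 < μ) {x : ι ⊕ κ → ℝ} (hx : x ≠ 0)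
    (hxμ : fromBlocks (-P) Aᵀ A R *ᵥ x = μ • x) : μ ^ 2 - lam * μ - σ ^ 2 ≤ 0 := by
  set u := x ∘ Sum.inl
  set v := x ∘ Sum.inr
  have hx_eq : x = Sum.elim u v := (Sum.elim_comp_inl_inr x).symm
  rw [hx_eq, fromBlocks_mulVec] at hxμ
  have hu_row : -P *ᵥ u + Aᵀ *ᵥ v = μ • u := funext fun i => congrFun hxμ (Sum.inl i)
  have hv_row : A *ᵥ u + R *ᵥ v = μ • v := funext fun j => congrFun hxμ (Sum.inr j)
  set t := u ⬝ᵥ Aᵀ *ᵥ v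
  have hu_le : μ * (u ⬝ᵥ u) ≤ t := by
    have h := congrArg (u ⬝ᵥ ·) hu_row
    simp only [dotProduct_add, neg_mulVec, dotProduct_neg, dotProduct_smul, smul_eq_mul] at h
    linarith [by simpa using hP.dotProduct_mulVec_nonneg u]
  have hv_le : (μ - lam) * (v ⬝ᵥ v) ≤ t := by
    have h := congrArg (v ⬝ᵥ ·) hv_row
    simp only [dotProduct_add, dotProduct_smul, smul_eq_mul] at h
    have hvAu : v ⬝ᵥ A *ᵥ u = t := by
      rw [dotProduct_mulVec, ← mulVec_transpose, dotProduct_comm]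
    linarith [hR v]
  have ht : t ^ 2 ≤ σ ^ 2 * (u ⬝ᵥ u) * (v ⬝ᵥ v) := by
    have := mul_le_mul_of_nonneg_left (hA v) (dotProduct_self_nonneg u)
    nlinarith [sq_dotProduct_le u (Aᵀ *ᵥ v)]
  have hx_pos : 0 < u ⬝ᵥ u + v ⬝ᵥ v := by
    rw [← sumElim_dotProduct_sumElim, ← hx_eq]
    simpa using dotProduct_self_star_pos_iff.2 hx
  exact sq_sub_mul_sub_sq_nonpos hμ (dotProduct_self_nonneg u) (dotProduct_self_nonneg v)
    hx_pos hu_le hv_le ht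

theorem stmt_11 {m n : ℕ} (A : Matrix (Fin m) (Fin n) ℝ)
    (d : Fin n → ℝ) (hd : ∀ j, 0 < d j)
    (Rd : Matrix (Fin m) (Fin m) ℝ) (hRd : Rd.PosDef)
    (M : Matrix (Fin n ⊕ Fin m) (Fin n ⊕ Fin m) ℝ)
    (hMdef : M = Matrix.fromBlocks (-(Matrix.diagonal d)⁻¹) Aᵀ A Rd) :
    ∀ μ : ℝ, 0 < μ →
      ∀ x : Fin n ⊕ Fin m → ℝ, x ≠ 0 → M.mulVec x = μ • x →
      (μ ^ 2 - (⨆ i, hRd.1.eigenvalues i) * μ - specNorm A ^ 2 ≤ 0) ∧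
      (μ ≤ (1 / 2) * ((⨆ i, hRd.1.eigenvalues i) +
        Real.sqrt ((⨆ i, hRd.1.eigenvalues i) ^ 2 + 4 * specNorm A ^ 2))) ∧
      (∀ δd : ℝ, 0 < δd → (⨆ i, hRd.1.eigenvalues i) ≤ 2 * δd →
        μ ≤ (1 / 2) * (2 * δd + Real.sqrt (4 * δd ^ 2 + 4 * specNorm A ^ 2))) := by
  intro μ hμ x hx hxμ
  set lam := ⨆ i, hRd.1.eigenvalues i
  have hΘ : ((diagonal d)⁻¹).PosSemidef := (PosSemidef.diagonal fun j => (hd j).le).inv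
  have hquad : μ ^ 2 - lam * μ - specNorm A ^ 2 ≤ 0 := by
    subst hMdef
    exact sq_sub_mul_sub_sq_nonpos_fromBlocks hΘ A hRd.1.dotProduct_mulVec_le_iSup_eigenvalues
      (dotProduct_self_transpose_mulVec_le_specNorm_sq A) hμ hx hxμ
  refine ⟨hquad, le_half_add_sqrt_of_sq_sub_mul_sub_sq_nonpos hquad, fun δd _ hlam => ?_⟩
  have hquad_δ : μ ^ 2 - (2 * δd) * μ - specNorm A ^ 2 ≤ 0 := by nlinarith
  simpa [mul_pow, show (2 : ℝ) ^ 2 = 4 by norm_num]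
    using le_half_add_sqrt_of_sq_sub_mul_sub_sq_nonpos hquad_δ
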